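/- arXiv:2501.07036 — 7 statements merged into one kernel-verified Lean document; each statement's English description precedes it below -/
import Mathlib

section
/- Let n ≥ 1, k ≥ 1, and let R be a reflexive relation on {1,…,n}. Suppose there exists a set S ⊆ {1,…,n} with |S| ≤ k that dominates R. Then there exists a map f : ({1,…,n} → {0,…,k}) → ({1,…,n} → {0,…,k}) that is R-local, satisfies validity, and satisfies agreement: for every input x, the set of values { f(x)(i) : i ∈ {1,…,n} } has cardinality at most k. -/
/-- Correctness of the trivial flooding algorithm: if some set of at most `k`
nodes dominates the reflexive relation `R`, then there is an `R`-local map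
satisfying validity and agreement (at most `k` distinct output values). -/
theorem kset_upper_bound (n k : ℕ) (hn : 1 ≤ n) (hk : 1 ≤ k)
    (R : Fin n → Fin n → Prop) (hrefl : ∀ u, R u u)
    (hdom : ∃ S : Finset (Fin n), S.card ≤ k ∧ ∀ v : Fin n, ∃ u ∈ S, R u v) :
    ∃ f : (Fin n → Fin (k + 1)) → (Fin n → Fin (k + 1)),
      (∀ (x y : Fin n → Fin (k + 1)) (i : Fin n),
        (∀ j : Fin n, R j i → x j = y j) → f x i = f y i) ∧
      (∀ (x : Fin n → Fin (k + 1)) (i : Fin n), ∃ j : Fin n, f x i = x j) ∧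
      (∀ x : Fin n → Fin (k + 1), (Finset.univ.image (f x)).card ≤ k) := by
  obtain ⟨S, hScard, hS⟩ := hdom
  choose u hu hRu using hS
  refine ⟨fun x i => x (u i), ?_, ?_, ?_⟩
  · intro x y i h
    exact h (u i) (hRu i)
  · intro x i
    exact ⟨u i, rfl⟩
  · intro x
    calc (Finset.univ.image fun i => x (u i)).card
        ≤ (S.image x).card := by
          apply Finset.card_le_card
          intro b hb
          simp only [Finset.mem_image, Finset.mem_univ, true_and] at hb ⊢
          obtain ⟨i, hi⟩ := hb
          exact ⟨u i, hu i, hi⟩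
      _ ≤ S.card := Finset.card_image_le
      _ ≤ k := hScard
end

section
/- Let n ≥ 1 and let R be a reflexive relation on {1,…,n} such that no single vertex dominates R, i.e., for every u ∈ {1,…,n} there exists v with not (u R v). Then there is no map f : ({1,…,n} → {0,1}) → ({1,…,n} → {0,1}) that is R-local, satisfies validity, and satisfies agreement in the sense that for every input x all outputs are equal: f(x)(i) = f(x)(j) for all i, j. (Impossibility of consensus, proved by a chain of input configurations I_0,…,I_n where I_i is obtained from I_{i−1} by switching the input of node i from 0 to 1.) -/
/-- Impossibility of consensus: if `R` is a reflexive relation on the `n`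
nodes such that no single node dominates `R`, then no `R`-local map on binary
inputs satisfies both validity and agreement (all outputs equal). -/
theorem consensus_impossibility (n : ℕ) (hn : 1 ≤ n)
    (R : Fin n → Fin n → Prop) (hrefl : ∀ u, R u u)
    (hdom : ∀ u : Fin n, ∃ v : Fin n, ¬ R u v) :
    ¬ ∃ f : (Fin n → Fin 2) → (Fin n → Fin 2),
        (∀ (x y : Fin n → Fin 2) (i : Fin n),
          (∀ j : Fin n, R j i → x j = y j) → f x i = f y i) ∧
        (∀ (x : Fin n → Fin 2) (i : Fin n), ∃ j : Fin n, f x i = x j) ∧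
        (∀ (x : Fin n → Fin 2) (i j : Fin n), f x i = f x j) := by
  rintro ⟨f, hloc, hval, hagree⟩
  -- the chain of configurations
  set I : ℕ → Fin n → Fin 2 := fun k j => if (j : ℕ) < k then 1 else 0 with hI
  have h0 : (0 : ℕ) < n := hn
  let i0 : Fin n := ⟨0, h0⟩
  set g : ℕ → Fin 2 := fun k => f (I k) i0 with hg
  -- g 0 = 0
  have hg0 : g 0 = 0 := by
    obtain ⟨j, hj⟩ := hval (I 0) i0
    simp only [hg, hI] at hj ⊢
    simpa using hj
  -- g n = 1
  have hgn : g n = 1 := by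
    obtain ⟨j, hj⟩ := hval (I n) i0
    simp only [hg, hI] at hj ⊢
    rw [hj, if_pos j.isLt]
  -- find a step where g changes
  have hstep : ∃ k < n, g k ≠ g (k + 1) := by
    by_contra h
    push_neg at h
    have hconst : ∀ k ≤ n, g k = g 0 := by
      intro k hk
      induction k with
      | zero => rfl
      | succ m ih =>
        rw [← h m (by omega), ih (by omega)]
    have := hconst n le_rfl
    rw [hg0, hgn] at this
    exact absurd this (by decide)
  obtain ⟨k, hk, hne⟩ := hstep
  let u : Fin n := ⟨k, hk⟩
  obtain ⟨v, hv⟩ := hdom u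
  -- I k and I (k+1) agree on all j ≠ u, in particular on all j with R j v
  have hagreeinput : ∀ j : Fin n, R j v → I k j = I (k + 1) j := by
    intro j hj
    have hjne : (j : ℕ) ≠ k := by
      intro hjk
      apply hv
      have : j = u := Fin.ext hjk
      rwa [this] at hj
    simp only [hI]
    by_cases hlt : (j : ℕ) < k
    · rw [if_pos hlt, if_pos (by omega)]
    · rw [if_neg hlt, if_neg (by omega)]
  have heq : f (I k) v = f (I (k + 1)) v := hloc _ _ v hagreeinput
  apply hne
  calc g k = f (I k) v := hagree (I k) i0 v
    _ = f (I (k + 1)) v := heq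
    _ = g (k + 1) := hagree (I (k + 1)) v i0
end

section
/- Let n ≥ 2, k ≥ 1, and let R be a reflexive relation on {1,…,n} such that no subset S ⊆ {1,…,n} with |S| ≤ k dominates R. Then there is no map f : ({1,…,n} → {1,…,n}) → ({1,…,n} → {1,…,n}) that is R-local, satisfies validity, and satisfies agreement (for every input x, at most k distinct values appear among the outputs f(x)(1),…,f(x)(n)). In other words, when the input values range over a set of cardinality at least n, k-set agreement is impossible for any R-local algorithm. (Proof: on input x(i) = i, pick a node a not dominated by the at most k output values; changing the input of its output value b to any c ≠ b is invisible to a, which then outputs a non-input value, violating validity.) -/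
/-- Impossibility of `k`-set agreement with large input space: if `R` is a
reflexive relation on the `n ≥ 2` nodes and no set of at most `k` nodes
dominates `R`, then no `R`-local map with inputs and outputs in `{1,…,n}`
satisfies both validity and agreement (at most `k` distinct output values). -/
theorem kset_impossibility_large_inputs (n k : ℕ) (hn : 2 ≤ n) (hk : 1 ≤ k)
    (R : Fin n → Fin n → Prop) (hrefl : ∀ u, R u u)
    (hdom : ∀ S : Finset (Fin n), S.card ≤ k → ∃ v : Fin n, ∀ u ∈ S, ¬ R u v) :
    ¬ ∃ f : (Fin n → Fin n) → (Fin n → Fin n),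
        (∀ (x y : Fin n → Fin n) (i : Fin n),
          (∀ j : Fin n, R j i → x j = y j) → f x i = f y i) ∧
        (∀ (x : Fin n → Fin n) (i : Fin n), ∃ j : Fin n, f x i = x j) ∧
        (∀ x : Fin n → Fin n, (Finset.univ.image (f x)).card ≤ k) := by
  rintro ⟨f, hloc, hval, hagree⟩
  set x : Fin n → Fin n := id with hx
  obtain ⟨a, ha⟩ := hdom (Finset.univ.image (f x)) (hagree x)
  set b : Fin n := f x a with hb
  have hbS : b ∈ Finset.univ.image (f x) :=
    Finset.mem_image.mpr ⟨a, Finset.mem_univ a, rfl⟩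
  have hnRba : ¬ R b a := ha b hbS
  -- pick c ≠ b
  obtain ⟨c, hc⟩ : ∃ c : Fin n, c ≠ b := by
    haveI : Nontrivial (Fin n) := Fin.nontrivial_iff_two_le.mpr hn
    exact exists_ne b
  set y : Fin n → Fin n := Function.update x b c with hy
  have heq : f y a = b := by
    have := hloc x y a (fun j hj => by
      have hjb : j ≠ b := fun h => hnRba (h ▸ hj)
      simp [hy, Function.update_of_ne hjb])
    exact this.symm.trans hb.symm
  obtain ⟨j, hj⟩ := hval y a
  rw [heq] at hj
  by_cases hjb : j = b
  · subst hjb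
    simp [hy, Function.update_self] at hj
    exact hc hj.symm
  · rw [hy, Function.update_of_ne hjb] at hj
    exact hjb hj.symm
end

section
/- Let y ∈ V(T), let X ⊆ {1,…,k}, and suppose z = y − Σ_{i ∈ X} e_i also belongs to V(T). Then for every node m ∈ {1,…,n}, the inputs of node m differ in the two configurations, i.e., inp(y)(m) ≠ inp(z)(m), if and only if m = y_i for some i ∈ X. That is, the set of nodes with different input values in inp(y) and inp(z) is exactly { y_i : i ∈ X }. -/
/-- `inT n k x` : `x` is a vertex of Kuhn's triangulation of the simplex `Δ`,
i.e. `n ≥ x_1 ≥ x_2 ≥ … ≥ x_k ≥ 0`. -/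
def inT (n k : ℕ) (x : Fin k → ℤ) : Prop :=
  (∀ i, 0 ≤ x i ∧ x i ≤ (n : ℤ)) ∧ ∀ i j : Fin k, i ≤ j → x j ≤ x i

/-- The input of node `m+1` (for `m : Fin n`) in the configuration assigned to
the vertex `x`: the number of coordinates `i` with `x i ≥ m+1`. -/
def inp (n k : ℕ) (x : Fin k → ℤ) (m : Fin n) : ℕ :=
  (Finset.univ.filter fun i : Fin k => ((m : ℕ) : ℤ) + 1 ≤ x i).card

/-- If `y` and `z = y − Σ_{i ∈ X} e_i` are both vertices of Kuhn's
triangulation, then the set of nodes whose inputs differ in `inp y` and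
`inp z` is exactly `{ y_i : i ∈ X }`. -/
theorem inp_diff_set (n k : ℕ) (hn : 1 ≤ n) (hk : 1 ≤ k)
    (y : Fin k → ℤ) (hy : inT n k y) (X : Finset (Fin k))
    (hz : inT n k (fun i => if i ∈ X then y i - 1 else y i)) :
    ∀ m : Fin n,
      inp n k y m ≠ inp n k (fun i => if i ∈ X then y i - 1 else y i) m ↔
        ∃ i ∈ X, ((m : ℕ) : ℤ) + 1 = y i := by
  intro m
  set c : ℤ := ((m : ℕ) : ℤ) + 1 with hc
  set A : Finset (Fin k) := Finset.univ.filter fun i => c ≤ y i with hA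
  set B : Finset (Fin k) :=
    Finset.univ.filter fun i => c ≤ (if i ∈ X then y i - 1 else y i) with hB
  have hsub : B ⊆ A := by
    intro i hi
    simp only [hB, hA, Finset.mem_filter, Finset.mem_univ, true_and] at hi ⊢
    split at hi <;> omega
  have h1 : inp n k y m = A.card := rfl
  have h2 : inp n k (fun i => if i ∈ X then y i - 1 else y i) m = B.card := rfl
  rw [h1, h2]
  constructor
  · intro hne
    have : B ≠ A := fun h => hne (by rw [h])
    have hss : B ⊂ A := Finset.ssubset_iff_subset_ne.mpr ⟨hsub, this⟩
    obtain ⟨i, hiA, hiB⟩ := Finset.exists_of_ssubset hss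
    simp only [hA, hB, Finset.mem_filter, Finset.mem_univ, true_and] at hiA hiB
    by_cases hiX : i ∈ X
    · refine ⟨i, hiX, ?_⟩
      rw [if_pos hiX] at hiB
      omega
    · rw [if_neg hiX] at hiB; omega
  · rintro ⟨i, hiX, hyi⟩
    have hiA : i ∈ A := by
      simp only [hA, Finset.mem_filter, Finset.mem_univ, true_and]; omega
    have hiB : i ∉ B := by
      simp only [hB, Finset.mem_filter, Finset.mem_univ, true_and, if_pos hiX]
      omega
    have : B ⊂ A := Finset.ssubset_iff_subset_ne.mpr ⟨hsub, fun h => hiB (h ▸ hiA)⟩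
    exact fun h => (Finset.card_lt_card this).ne (h.symm)
end

section
/- Let y_0, y_1, …, y_k be a primitive simplex of Kuhn's triangulation, and for each i ∈ {0,…,k} let V_i = { m ∈ {1,…,n} : inp(y_i)(m) ≠ inp(y_0)(m) } be the set of nodes whose inputs differ between configurations inp(y_i) and inp(y_0). Then for every i ∈ {0,…,k−1}: V_i ⊆ V_{i+1} and |V_{i+1} \ V_i| ≤ 1; consequently |V_i| ≤ i for every i ∈ {0,…,k}. -/
/-- Let `y 0, y 1, …, y k` be a primitive simplex of Kuhn's triangulation
(i.e. `y (i+1) = y i + e_{π (i+1)}` for a permutation `π`), and let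
`V i` be the set of nodes whose inputs differ between `inp (y i)` and
`inp (y 0)`. Then `V i ⊆ V (i+1)`, `|V (i+1) \ V i| ≤ 1`, and `|V i| ≤ i`. -/
theorem inp_diff_chain_primitive_simplex (n k : ℕ) (hn : 1 ≤ n) (hk : 1 ≤ k)
    (y : Fin (k + 1) → Fin k → ℤ) (π : Equiv.Perm (Fin k))
    (hmem : ∀ i, inT n k (y i))
    (hstep : ∀ i : Fin k,
      y i.succ = fun t => y i.castSucc t + if t = π i then 1 else 0) :
    (∀ i : Fin k,
      (Finset.univ.filter fun m : Fin n =>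
          inp n k (y i.castSucc) m ≠ inp n k (y 0) m) ⊆
        (Finset.univ.filter fun m : Fin n =>
          inp n k (y i.succ) m ≠ inp n k (y 0) m) ∧
      ((Finset.univ.filter fun m : Fin n =>
          inp n k (y i.succ) m ≠ inp n k (y 0) m) \
        (Finset.univ.filter fun m : Fin n =>
          inp n k (y i.castSucc) m ≠ inp n k (y 0) m)).card ≤ 1) ∧
    ∀ i : Fin (k + 1),
      (Finset.univ.filter fun m : Fin n =>
        inp n k (y i) m ≠ inp n k (y 0) m).card ≤ (i : ℕ) := by
  -- Step formula for `inp`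
  have hstep' : ∀ (i : Fin k) (m : Fin n),
      inp n k (y i.succ) m =
        inp n k (y i.castSucc) m +
          (if ((m : ℕ) : ℤ) = y i.castSucc (π i) then 1 else 0) := by
    intro i m
    simp only [inp, hstep i, Finset.card_filter]
    have : ∀ t : Fin k,
        (if ((m : ℕ) : ℤ) + 1 ≤ y i.castSucc t + (if t = π i then 1 else 0)
          then 1 else 0) =
        (if ((m : ℕ) : ℤ) + 1 ≤ y i.castSucc t then 1 else 0) +
          (if t = π i then (if ((m : ℕ) : ℤ) = y i.castSucc (π i) then 1 else 0)
            else 0) := by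
      intro t
      by_cases ht : t = π i
      · subst ht
        split_ifs <;> omega
      · simp [ht]
    rw [Finset.sum_congr rfl (fun t _ => this t), Finset.sum_add_distrib,
      Finset.sum_ite_eq' Finset.univ (π i)]
    simp
  have hmono : ∀ (j : Fin (k + 1)) (m : Fin n),
      inp n k (y 0) m ≤ inp n k (y j) m := by
    intro j
    induction j using Fin.induction with
    | zero => intro m; exact le_refl _
    | succ i ih =>
      intro m
      rw [hstep' i m]
      exact le_trans (ih m) (Nat.le_add_right _ _)
  have hsub : ∀ i : Fin k,
      (Finset.univ.filter fun m : Fin n =>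
          inp n k (y i.castSucc) m ≠ inp n k (y 0) m) ⊆
        (Finset.univ.filter fun m : Fin n =>
          inp n k (y i.succ) m ≠ inp n k (y 0) m) := by
    intro i m hm
    simp only [Finset.mem_filter, Finset.mem_univ, true_and] at hm ⊢
    have h1 := hmono i.castSucc m
    have h2 := hstep' i m
    omega
  have hdiff : ∀ i : Fin k,
      ((Finset.univ.filter fun m : Fin n =>
          inp n k (y i.succ) m ≠ inp n k (y 0) m) \
        (Finset.univ.filter fun m : Fin n =>
          inp n k (y i.castSucc) m ≠ inp n k (y 0) m)).card ≤ 1 := by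
    intro i
    have hss : ((Finset.univ.filter fun m : Fin n =>
          inp n k (y i.succ) m ≠ inp n k (y 0) m) \
        (Finset.univ.filter fun m : Fin n =>
          inp n k (y i.castSucc) m ≠ inp n k (y 0) m)) ⊆
        Finset.univ.filter fun m : Fin n =>
          ((m : ℕ) : ℤ) = y i.castSucc (π i) := by
      intro m hm
      simp only [Finset.mem_sdiff, Finset.mem_filter, Finset.mem_univ, true_and,
        not_ne_iff] at hm
      simp only [Finset.mem_filter, Finset.mem_univ, true_and]
      have h2 := hstep' i m
      by_contra hc
      rw [if_neg hc] at h2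
      omega
    refine le_trans (Finset.card_le_card hss) ?_
    apply Finset.card_le_one.2
    intro a ha b hb
    simp only [Finset.mem_filter, Finset.mem_univ, true_and] at ha hb
    have : (a : ℕ) = (b : ℕ) := by exact_mod_cast ha.trans hb.symm
    exact Fin.ext this
  refine ⟨fun i => ⟨hsub i, hdiff i⟩, ?_⟩
  intro i
  induction i using Fin.induction with
  | zero => simp
  | succ i ih =>
    have h1 : (Finset.univ.filter fun m : Fin n =>
        inp n k (y i.succ) m ≠ inp n k (y 0) m).card ≤
        ((Finset.univ.filter fun m : Fin n =>
          inp n k (y i.succ) m ≠ inp n k (y 0) m) \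
          (Finset.univ.filter fun m : Fin n =>
            inp n k (y i.castSucc) m ≠ inp n k (y 0) m)).card +
        (Finset.univ.filter fun m : Fin n =>
          inp n k (y i.castSucc) m ≠ inp n k (y 0) m).card :=
      Finset.card_le_card_sdiff_add_card
    have h2 := hdiff i
    have h3 := ih
    simp only [Fin.val_succ, Fin.coe_castSucc] at *
    omega
end

section
/- Let R be a relation on {1,…,n}. Let y ∈ V(T), and let p ∈ {1,…,n} be a node such that for every coordinate i ∈ {1,…,k} with y_i ≥ 1 one has not (y_i R p) (node p receives no information from any of the processes y_1,…,y_k other than 0). Let X ⊆ {1,…,k} be such that z = y − Σ_{i ∈ X} e_i ∈ V(T). Then node p has the same view in configurations inp(y) and inp(z): for every j ∈ {1,…,n} with j R p, inp(y)(j) = inp(z)(j). -/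
/-- If the node `p` receives no information (w.r.t. the reachability relation
`R`) from any of the nodes `y_1, …, y_k` (other than `0`), and
`z = y − Σ_{i ∈ X} e_i` is also a vertex of the triangulation, then `p` has
the same view in the configurations `inp y` and `inp z`. -/
theorem same_view_of_not_reached (n k : ℕ) (hn : 1 ≤ n) (hk : 1 ≤ k)
    (R : Fin n → Fin n → Prop)
    (y : Fin k → ℤ) (hy : inT n k y) (p : Fin n)
    (hp : ∀ (i : Fin k) (u : Fin n), ((u : ℕ) : ℤ) + 1 = y i → ¬ R u p)
    (X : Finset (Fin k))
    (hz : inT n k (fun i => if i ∈ X then y i - 1 else y i)) :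
    ∀ j : Fin n, R j p →
      inp n k y j = inp n k (fun i => if i ∈ X then y i - 1 else y i) j := by
  intro j hj
  unfold inp
  congr 1
  apply Finset.filter_congr
  intro i _
  simp only [eq_iff_iff]
  by_cases hi : i ∈ X
  · simp only [hi, if_true]
    constructor
    · intro h
      have hne : ((j : ℕ) : ℤ) + 1 ≠ y i := fun he => hp i j he hj
      omega
    · intro h; omega
  · simp [hi]
end

section
/- For j ∈ {0,…,k} let v_j = n·(e_1 + ⋯ + e_j) ∈ ℝ^k (with v_0 the origin) be the extreme points of the simplex Δ. Let y ∈ V(T), viewed as a point of ℝ^k, and let I ⊆ {0,…,k} be such that y lies in the convex hull of { v_j : j ∈ I }. Then every value attained by the input configuration inp(y) belongs to I: for every node m ∈ {1,…,n}, inp(y)(m) ∈ I. Consequently, any coloring that assigns to each vertex y ∈ V(T) a value appearing in inp(y) (as forced by the validity condition of k-set agreement) is a Sperner coloring of Kuhn's triangulation of Δ. -/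
/-- The extreme point `v_j = n·(e_1 + ⋯ + e_j)` of the simplex `Δ ⊂ ℝ^k`
(so `v_0` is the origin and `v_k = (n,…,n)`). -/
def vSimplex (n k : ℕ) (j : ℕ) : Fin k → ℝ :=
  fun i => if (i : ℕ) < j then (n : ℝ) else 0

/-- If a vertex `y` of Kuhn's triangulation lies on the face of `Δ` spanned by
`{ v_j : j ∈ I }` (for `I ⊆ {0,…,k}`), then every value attained by the input
configuration `inp y` belongs to `I`; hence a coloring assigning to each
vertex a value appearing in its input configuration is a Sperner coloring. -/
theorem values_on_face_mem_index_set (n k : ℕ) (hn : 1 ≤ n) (hk : 1 ≤ k)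
    (y : Fin k → ℤ) (hy : inT n k y) (I : Set ℕ) (hI : I ⊆ Set.Iic k)
    (hface : (fun i : Fin k => (y i : ℝ)) ∈
      convexHull ℝ ((fun j => vSimplex n k j) '' I)) :
    ∀ m : Fin n, inp n k y m ∈ I := by
  intro m
  rw [convexHull_eq] at hface
  obtain ⟨ι, t, w, z, hw0, hsum, hmem, hcm⟩ := hface
  -- choose indices j a ∈ I with vSimplex n k (j a) = z a
  have hch : ∀ a : ι, ∃ jv : ℕ, a ∈ t → jv ∈ I ∧ vSimplex n k jv = z a := by
    intro a
    by_cases h : a ∈ t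
    · obtain ⟨jv, hjv, hz⟩ := hmem a h
      exact ⟨jv, fun _ => ⟨hjv, hz⟩⟩
    · exact ⟨0, fun h' => absurd h' h⟩
  choose j hj using hch
  set S : ℕ → ℝ := fun c => ∑ a ∈ t.filter (fun a => c ≤ j a), w a with hS
  have hyi : ∀ i : Fin k, (y i : ℝ) = (n : ℝ) * S (i.val + 1) := by
    intro i
    have h1 := congrFun hcm i
    rw [Finset.centerMass_eq_of_sum_1 _ _ hsum] at h1
    rw [Finset.sum_apply] at h1
    rw [hS]
    rw [Finset.mul_sum, Finset.sum_filter]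
    rw [← h1]
    refine Finset.sum_congr rfl ?_
    intro a ha
    have hz := (hj a ha).2
    rw [Pi.smul_apply, smul_eq_mul, ← hz]
    simp only [vSimplex]
    by_cases hc : i.val + 1 ≤ j a
    · rw [if_pos hc, if_pos (by omega)]
      ring
    · rw [if_neg hc, if_neg (by omega), mul_zero]
  have hS0 : S 0 = 1 := by
    rw [hS]
    simpa using hsum
  have hSk : S (k + 1) = 0 := by
    rw [hS]
    apply Finset.sum_eq_zero
    intro a ha
    exfalso
    have := hI (hj a (Finset.mem_filter.mp ha).1).1
    have h2 := (Finset.mem_filter.mp ha).2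
    simp only [Set.mem_Iic] at this
    omega
  set c := inp n k y m with hc
  set F := Finset.univ.filter fun i : Fin k => ((m : ℕ) : ℤ) + 1 ≤ y i with hF
  have hcF : c = F.card := rfl
  have hck : c ≤ k := by
    rw [hcF]
    exact le_trans (Finset.card_le_card (Finset.filter_subset _ _)) (by simp)
  -- monotonicity facts
  have hmono := hy.2
  have hbd := hy.1
  have ha' : ∀ (h : c < k), y ⟨c, h⟩ ≤ ((m : ℕ) : ℤ) := by
    intro h
    by_contra hcon
    push_neg at hcon
    have hsub : Finset.range (c + 1) ⊆ Finset.image (fun i : Fin k => i.val) F := by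
      intro x hx
      rw [Finset.mem_range] at hx
      have hxk : x < k := by omega
      refine Finset.mem_image.mpr ⟨⟨x, hxk⟩, ?_, rfl⟩
      rw [hF, Finset.mem_filter]
      refine ⟨Finset.mem_univ _, ?_⟩
      have := hmono ⟨x, hxk⟩ ⟨c, h⟩ (by simp [Fin.le_def]; omega)
      omega
    have := Finset.card_le_card hsub
    rw [Finset.card_range] at this
    have h3 : (Finset.image (fun i : Fin k => i.val) F).card ≤ F.card :=
      Finset.card_image_le
    omega
  have hb' : ∀ (h : 0 < c), ((m : ℕ) : ℤ) + 1 ≤ y ⟨c - 1, by omega⟩ := by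
    intro h
    by_contra hcon
    push_neg at hcon
    have hsub : Finset.image (fun i : Fin k => i.val) F ⊆ Finset.range (c - 1) := by
      intro x hx
      rw [Finset.mem_image] at hx
      obtain ⟨i, hiF, rfl⟩ := hx
      rw [hF, Finset.mem_filter] at hiF
      rw [Finset.mem_range]
      by_contra hge
      push_neg at hge
      have := hmono ⟨c - 1, by omega⟩ i (by simp [Fin.le_def]; omega)
      omega
    have h1 := Finset.card_le_card hsub
    rw [Finset.card_range] at h1
    have h2 : F.card = (Finset.image (fun i : Fin k => i.val) F).card :=
      (Finset.card_image_of_injective F Fin.val_injective).symm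
    omega
  -- main argument
  by_contra hcI
  have hSeq : S c = S (c + 1) := by
    rw [hS]
    apply Finset.sum_congr _ (fun _ _ => rfl)
    apply Finset.filter_congr
    intro a ha
    have hjI := (hj a ha).1
    have : j a ≠ c := fun he => hcI (he ▸ hjI)
    omega
  have hmn : (m : ℕ) < n := m.isLt
  have key1 : ((m : ℕ) : ℝ) + 1 ≤ (n : ℝ) * S c := by
    rcases Nat.eq_zero_or_pos c with h0 | hpos
    · rw [h0, hS0, mul_one]
      have : (m : ℕ) + 1 ≤ n := by omega
      exact_mod_cast this
    · have := hb' hpos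
      have heq := hyi ⟨c - 1, by omega⟩
      have : (((m : ℕ) : ℤ) + 1 : ℤ) ≤ y ⟨c - 1, by omega⟩ := this
      have hcast : ((m : ℕ) : ℝ) + 1 ≤ ((y ⟨c - 1, by omega⟩ : ℤ) : ℝ) := by
        exact_mod_cast this
      rw [heq] at hcast
      simp only [Fin.val_mk] at hcast
      rwa [show c - 1 + 1 = c from by omega] at hcast
  have key2 : (n : ℝ) * S (c + 1) ≤ ((m : ℕ) : ℝ) := by
    rcases eq_or_lt_of_le hck with h0 | hlt
    · rw [h0, hSk, mul_zero]
      positivity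
    · have := ha' hlt
      have hcast : ((y ⟨c, hlt⟩ : ℤ) : ℝ) ≤ ((m : ℕ) : ℝ) := by exact_mod_cast this
      rw [hyi ⟨c, hlt⟩] at hcast
      exact hcast
  rw [hSeq] at key1
  linarith
end
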